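/- arXiv:2405.15509 — 3 statements merged into one kernel-verified Lean document; each statement's English description precedes it below -/
import Mathlib

section
/- Let X, A be finite sets, γ ∈ (0,1), P_a ∈ ℝ^{|X|×|X|} row-stochastic matrices for each a ∈ A, and fix a₁ ∈ A. Then the matrix I − γP_{a₁} is invertible, and for a state-only cost c ∈ ℝ^{|X|}, the following are equivalent: (i) there exists u ∈ ℝ^{|X|} with c − u + γP_{a₁}u = 0 and c − u + γP_a u ≥ 0 componentwise for all a ≠ a₁; (ii) (P_{a₁} − P_a)(I − γP_{a₁})^{−1} c ≤ 0 componentwise for all a ∈ A \setminus {a₁}. -/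
open Matrix

private lemma stmt11_ker {X : Type*} [Fintype X] [DecidableEq X]
    (γ : ℝ) (hγ0 : 0 < γ) (hγ1 : γ < 1) (Q : Matrix X X ℝ)
    (hQ0 : ∀ x y, 0 ≤ Q x y) (hQ1 : ∀ x, ∑ y, Q x y = 1)
    (w : X → ℝ) (hw : (1 - γ • Q).mulVec w = 0) : w = 0 := by
  cases isEmpty_or_nonempty X with
  | inl h => funext x; exact (IsEmpty.false x).elim
  | inr h =>
    have hw' : ∀ x, w x = γ * ∑ y, Q x y * w y := by
      intro x
      have := congrFun hw x
      simp only [Matrix.sub_mulVec, Matrix.one_mulVec, Matrix.smul_mulVec,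
        Pi.sub_apply, Pi.smul_apply, smul_eq_mul, Pi.zero_apply, sub_eq_zero] at this
      simp only [Matrix.mulVec, dotProduct] at this
      exact this
    obtain ⟨x₀, -, hx₀⟩ := Finset.exists_max_image Finset.univ (fun x => |w x|)
      ⟨Classical.arbitrary X, Finset.mem_univ _⟩
    have hmax : ∀ x, |w x| ≤ |w x₀| := fun x => hx₀ x (Finset.mem_univ x)
    have key : |w x₀| ≤ γ * |w x₀| := by
      calc |w x₀| = γ * |∑ y, Q x₀ y * w y| := by
            rw [hw' x₀, abs_mul, abs_of_pos hγ0]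
        _ ≤ γ * ∑ y, Q x₀ y * |w y| := by
            refine mul_le_mul_of_nonneg_left ?_ hγ0.le
            refine (Finset.abs_sum_le_sum_abs _ _).trans ?_
            refine Finset.sum_le_sum fun y _ => ?_
            rw [abs_mul, abs_of_nonneg (hQ0 x₀ y)]
        _ ≤ γ * ∑ y, Q x₀ y * |w x₀| := by
            refine mul_le_mul_of_nonneg_left ?_ hγ0.le
            exact Finset.sum_le_sum fun y _ =>
              mul_le_mul_of_nonneg_left (hmax y) (hQ0 x₀ y)
        _ = γ * |w x₀| := by rw [← Finset.sum_mul, hQ1 x₀, one_mul]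
    have h0 : |w x₀| ≤ 0 := by nlinarith [abs_nonneg (w x₀)]
    funext x
    have := ((hmax x).trans h0).antisymm (abs_nonneg (w x))
    simpa [abs_eq_zero] using this

/-- Ng–Russell characterization: invertibility of I − γP_{a₁} and equivalence
of the certificate form with (P_{a₁} − P_a)(I − γP_{a₁})⁻¹ c ≤ 0. -/
theorem stmt11 {X A : Type*} [Fintype X] [DecidableEq X] [Fintype A]
    (γ : ℝ) (hγ0 : 0 < γ) (hγ1 : γ < 1)
    (P : A → Matrix X X ℝ)
    (hP : ∀ a, (∀ x y, 0 ≤ P a x y) ∧ ∀ x, ∑ y, P a x y = 1)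
    (a₁ : A) (c : X → ℝ) :
    IsUnit (1 - γ • P a₁) ∧
    ((∃ u : X → ℝ, (c - u + γ • (P a₁).mulVec u = 0) ∧
        ∀ a ≠ a₁, ∀ x, 0 ≤ (c - u + γ • (P a).mulVec u) x) ↔
      ∀ a ≠ a₁, ∀ x,
        ((P a₁ - P a).mulVec ((1 - γ • P a₁)⁻¹.mulVec c)) x ≤ 0) := by
  set M : Matrix X X ℝ := 1 - γ • P a₁ with hM
  have hinj : Function.Injective M.mulVec := by
    intro u v huv
    have h0 : M.mulVec (u - v) = 0 := by
      rw [Matrix.mulVec_sub, huv, sub_self]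
    have := stmt11_ker γ hγ0 hγ1 (P a₁) (hP a₁).1 (hP a₁).2 (u - v) h0
    exact sub_eq_zero.mp this
  have hUnit : IsUnit M := (Matrix.mulVec_injective_iff_isUnit).mp hinj
  refine ⟨hUnit, ?_⟩
  have hdet : IsUnit M.det := (Matrix.isUnit_iff_isUnit_det M).mp hUnit
  set u₀ : X → ℝ := M⁻¹.mulVec c with hu₀
  have hMu₀ : M.mulVec u₀ = c := by
    rw [hu₀, Matrix.mulVec_mulVec, Matrix.mul_nonsing_inv M hdet, Matrix.one_mulVec]
  -- key identity: c - u + γ • P_a u = (c - M u) + γ • ((P a) u - (P a₁) u)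
  have hid : ∀ (a : A) (u : X → ℝ),
      c - u + γ • (P a).mulVec u
        = (c - M.mulVec u) + γ • ((P a).mulVec u - (P a₁).mulVec u) := by
    intro a u
    rw [hM]
    simp only [Matrix.sub_mulVec, Matrix.one_mulVec, Matrix.smul_mulVec,
      smul_sub]
    abel
  have hid1 : ∀ u : X → ℝ, c - u + γ • (P a₁).mulVec u = c - M.mulVec u := by
    intro u
    rw [hid a₁ u]
    simp
  constructor
  · rintro ⟨u, hu1, hu2⟩ a ha x
    have hcM : M.mulVec u = c := by
      have h0 : c - M.mulVec u = 0 := by rw [← hid1 u, hu1]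
      have := sub_eq_zero.mp h0
      exact this.symm
    have huu : u = u₀ := hinj (by rw [hcM, hMu₀])
    have h2 := hu2 a ha x
    rw [hid a u, hcM, sub_self, zero_add] at h2
    have h3 : 0 ≤ γ * ((P a).mulVec u x - (P a₁).mulVec u x) := by
      simpa using h2
    have h4 : (P a₁).mulVec u x - (P a).mulVec u x ≤ 0 := by nlinarith
    rw [Matrix.sub_mulVec]
    simpa [← huu] using h4
  · intro h
    refine ⟨u₀, by rw [hid1 u₀, hMu₀, sub_self], fun a ha x => ?_⟩
    have h4 := h a ha x
    rw [Matrix.sub_mulVec] at h4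
    rw [hid a u₀, hMu₀, sub_self, zero_add]
    have : 0 ≤ (P a).mulVec u₀ x - (P a₁).mulVec u₀ x := by
      simp only [Pi.sub_apply] at h4 ⊢
      linarith
    simpa using mul_nonneg hγ0.le this
end

section
/- Let f : Z × Λ → ℝ be such that for each z, f(z,·) is L-Lipschitz on the metric space Λ, and let ℙ be a probability measure on Λ satisfying ℙ(B_r(λ)) > g(r) for all λ ∈ Λ and r > 0, for a strictly increasing g : ℝ₊ → [0,1]. If z satisfies the chance constraint ℙ[λ : f(z,λ) ≤ 0] ≥ 1 − g(ε/L) for some ε > 0, then f(z,λ) ≤ ε for all λ ∈ Λ. -/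
open MeasureTheory

/-- Chance-constraint feasibility implies robust ε-feasibility for Lipschitz
constraint functions when all balls have mass exceeding g(r). -/
theorem stmt13 {Z Λ : Type*} [MetricSpace Λ] [MeasurableSpace Λ]
    [OpensMeasurableSpace Λ]
    (μ : Measure Λ) [IsProbabilityMeasure μ]
    (L : ℝ) (hL : 0 < L)
    (g : ℝ → ℝ) (hg : StrictMonoOn g (Set.Ici (0 : ℝ)))
    (hg01 : ∀ r, 0 ≤ r → g r ∈ Set.Icc (0 : ℝ) 1)
    (hball : ∀ (lam : Λ) (r : ℝ), 0 < r →
      μ (Metric.ball lam r) > ENNReal.ofReal (g r))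
    (f : Z → Λ → ℝ)
    (hf : ∀ z, LipschitzWith (Real.toNNReal L) (f z))
    (z : Z) (ε : ℝ) (hε : 0 < ε)
    (hchance : μ {lam | f z lam ≤ 0} ≥ ENNReal.ofReal (1 - g (ε / L))) :
    ∀ lam, f z lam ≤ ε := by
  intro lam0
  by_contra h
  push_neg at h
  have hrpos : 0 < ε / L := div_pos hε hL
  -- the ball B_{ε/L}(lam0) is contained in {f z > 0}
  have hsub : Metric.ball lam0 (ε / L) ⊆ {lam | 0 < f z lam} := by
    intro lam hlam
    have hd : dist lam lam0 < ε / L := Metric.mem_ball.mp hlam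
    have hlip := (hf z).dist_le_mul lam lam0
    have hLnn : (Real.toNNReal L : ℝ) = L := Real.coe_toNNReal L hL.le
    rw [hLnn] at hlip
    have : dist (f z lam) (f z lam0) < L * (ε / L) := by
      calc dist (f z lam) (f z lam0) ≤ L * dist lam lam0 := hlip
        _ < L * (ε / L) := by
            exact mul_lt_mul_of_pos_left hd hL
    rw [mul_div_cancel₀ ε hL.ne'] at this
    have := abs_lt.mp (by simpa [Real.dist_eq] using this)
    have : f z lam0 - ε < f z lam := by linarith [this.1]
    simp only [Set.mem_setOf_eq]
    linarith
  -- so {f z ≤ 0} ⊆ complement of the ball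
  have hsub2 : {lam | f z lam ≤ 0} ⊆ (Metric.ball lam0 (ε / L))ᶜ := by
    intro lam hlam hmem
    have := hsub hmem
    simp only [Set.mem_setOf_eq] at this hlam
    linarith
  have hball' := hball lam0 (ε / L) hrpos
  have hg1 : g (ε / L) ≤ 1 := (hg01 _ hrpos.le).2
  have hmeas : MeasurableSet (Metric.ball lam0 (ε / L)) :=
    Metric.isOpen_ball.measurableSet
  have hcompl : μ (Metric.ball lam0 (ε / L))ᶜ = 1 - μ (Metric.ball lam0 (ε / L)) := by
    rw [measure_compl hmeas (measure_ne_top μ _), measure_univ]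
  have hlt : μ {lam | f z lam ≤ 0} < ENNReal.ofReal (1 - g (ε / L)) := by
    calc μ {lam | f z lam ≤ 0} ≤ μ (Metric.ball lam0 (ε / L))ᶜ := measure_mono hsub2
      _ = 1 - μ (Metric.ball lam0 (ε / L)) := hcompl
      _ < 1 - ENNReal.ofReal (g (ε / L)) := by
          have hb1 : μ (Metric.ball lam0 (ε / L)) ≤ 1 := prob_le_one
          exact ((ENNReal.cancel_of_ne ENNReal.one_ne_top).tsub_lt_tsub_iff_left_of_le
            (ENNReal.cancel_of_ne (ne_top_of_le_ne_top ENNReal.one_ne_top hb1)) hb1).mpr hball'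
      _ = ENNReal.ofReal (1 - g (ε / L)) := by
          rw [← ENNReal.ofReal_one, ← ENNReal.ofReal_sub _ ((hg01 _ hrpos.le).1)]
  exact absurd hchance (not_le.mpr hlt)
end

section
/- Suppose c̃ is ε-inverse feasible: there exists ũ with ⟨μ_E, c̃ − T*_γ ũ⟩ ≤ ε and c̃ − T*_γ ũ ≥ −ε pointwise on X × A. Define c = T*_γ ũ. Then c is exactly inverse feasible with certificate ũ (trivially, c − T*_γ ũ = 0), and the pair satisfies: ⟨μ_E, c̃ − c⟩ ≤ ε and c − c̃ ≤ ε pointwise. Consequently, for any two occupation-type measures μ̃ and μ_E each of total mass 1/(1−γ) with ⟨μ̃, c̃⟩ ≤ ⟨μ_E, c̃⟩, one has ⟨μ̃ − μ_E, c⟩ ≤ ⟨μ̃, c − c̃⟩ + ⟨μ_E, c̃ − c⟩ ≤ ε/(1−γ) + ε = ((2−γ)/(1−γ))·ε. -/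
open MeasureTheory

/-! The cost `c = T*_γ ũ` exceeds `c̃` by at most `ε` everywhere, so on the learner's measure of
mass `1/(1-γ)` it costs at most `ε/(1-γ)` more than `c̃`, while on the expert's measure it costs
at most `ε` less than `c̃` by the feasibility bound. Since the learner is optimal for `c̃`, the two
errors add up to the whole performance gap under `c`. -/

section

variable {α : Type*} [MeasurableSpace α] {μ ν : Measure α}

theorem integral_le_mul_measureReal_univ_of_ae_le [IsFiniteMeasure μ] {f : α → ℝ} {C : ℝ}
    (hf : Integrable f μ) (hC : ∀ᵐ x ∂μ, f x ≤ C) : ∫ x, f x ∂μ ≤ C * μ.real Set.univ := by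
  calc ∫ x, f x ∂μ ≤ ∫ _, C ∂μ := integral_mono_ae hf (integrable_const C) hC
    _ = C * μ.real Set.univ := by rw [integral_const, smul_eq_mul, mul_comm]

theorem integral_sub_integral_le_of_integral_le {c c' : α → ℝ}
    (hcμ : Integrable c μ) (hcν : Integrable c ν) (hc'μ : Integrable c' μ)
    (hc'ν : Integrable c' ν) (hopt : ∫ x, c' x ∂ν ≤ ∫ x, c' x ∂μ) :
    ∫ x, c x ∂ν - ∫ x, c x ∂μ ≤ ∫ x, (c x - c' x) ∂ν + ∫ x, (c' x - c x) ∂μ := by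
  rw [integral_sub hcν hc'ν, integral_sub hc'μ hcμ]
  linarith

end

theorem stmt16_general {X A : Type*} [MeasurableSpace X] [MeasurableSpace A]
    (γ ε : ℝ) (hγ1 : γ < 1)
    (μE μt : Measure (X × A)) [IsFiniteMeasure μt]
    (hμt : μt Set.univ = ENNReal.ofReal (1 / (1 - γ)))
    (T : (X → ℝ) → (X × A → ℝ))
    (ct : X × A → ℝ) (ut : X → ℝ)
    (h1 : ∫ p, (ct p - T ut p) ∂μE ≤ ε)
    (h2 : ∀ p, ct p - T ut p ≥ -ε)
    (hintE : Integrable ct μE) (hintt : Integrable ct μt)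
    (hTE : Integrable (T ut) μE) (hTt : Integrable (T ut) μt)
    (hopt : ∫ p, ct p ∂μt ≤ ∫ p, ct p ∂μE) :
    (∀ p, T ut p - ct p ≤ ε) ∧
    (∫ p, T ut p ∂μt - ∫ p, T ut p ∂μE ≤ (2 - γ) / (1 - γ) * ε) := by
  have hγ : 0 < 1 - γ := sub_pos.mpr hγ1
  have hpt : ∀ p, T ut p - ct p ≤ ε := fun p => by linarith [h2 p]
  refine ⟨hpt, ?_⟩
  have hmass : μt.real Set.univ = 1 / (1 - γ) := by
    rw [measureReal_def, hμt, ENNReal.toReal_ofReal (by positivity)]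
  calc ∫ p, T ut p ∂μt - ∫ p, T ut p ∂μE
      ≤ ∫ p, (T ut p - ct p) ∂μt + ∫ p, (ct p - T ut p) ∂μE :=
        integral_sub_integral_le_of_integral_le hTE hTt hintE hintt hopt
    _ ≤ ε * (1 / (1 - γ)) + ε := by
        gcongr
        rw [← hmass]
        exact integral_le_mul_measureReal_univ_of_ae_le (hTt.sub hintt) (ae_of_all _ hpt)
    _ = (2 - γ) / (1 - γ) * ε := by
        field_simp
        ring

/-- Proposition 3.4 computation: with c = T*_γ ũ exactly inverse feasible, the
performance gap of the expert under c is at most (2−γ)/(1−γ)·ε. -/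
theorem stmt16 {X A : Type*} [MeasurableSpace X] [MeasurableSpace A]
    (γ ε : ℝ) (hγ0 : 0 < γ) (hγ1 : γ < 1) (hε : 0 ≤ ε)
    (μE μt : Measure (X × A)) [IsFiniteMeasure μE] [IsFiniteMeasure μt]
    (hμE : μE Set.univ = ENNReal.ofReal (1 / (1 - γ)))
    (hμt : μt Set.univ = ENNReal.ofReal (1 / (1 - γ)))
    (T : (X → ℝ) → (X × A → ℝ))
    (ct : X × A → ℝ) (ut : X → ℝ)
    (h1 : ∫ p, (ct p - T ut p) ∂μE ≤ ε)
    (h2 : ∀ p, ct p - T ut p ≥ -ε)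
    (hintE : Integrable ct μE) (hintt : Integrable ct μt)
    (hTE : Integrable (T ut) μE) (hTt : Integrable (T ut) μt)
    (hopt : ∫ p, ct p ∂μt ≤ ∫ p, ct p ∂μE) :
    (∀ p, T ut p - ct p ≤ ε) ∧
    (∫ p, T ut p ∂μt - ∫ p, T ut p ∂μE ≤ (2 - γ) / (1 - γ) * ε) :=
  stmt16_general γ ε hγ1 μE μt hμt T ct ut h1 h2 hintE hintt hTE hTt hopt
end
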